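/- Let f : ℕ × ℕ → ℝ ∪ {+∞} be interval costs where f(j,i) = +∞ whenever the interval length i - j + 1 exceeds a bound B ≥ 1, and f(j,i) < +∞ otherwise. Define the DP M(0)=0, M(i)=min_{1≤j≤i}(M(j-1)+f(j,i)). Then M(n) is finite and equals the minimum of the total cost over all partitions of {1,...,n} into consecutive intervals each of length at most B. -/

import Mathlib

/-!
`M m` is the least cost of a partition of `{1, …, m}` into intervals of length at most `B`, by
strong induction on `m`: a partition of `{1, …, m}` is a partition of `{1, …, k}` followed by the
last interval `[k + 1, m]`, which is exactly the shape of the recurrence with `j = k + 1`. The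
bound `B ≥ 1` makes the singleton interval `[m, m]` affordable, so `M m` is finite and the
minimizing `j` of the recurrence yields an admissible last interval.
-/

/-- Cost of a partition into consecutive segments (lengths listed in `L`),
with values in `ℝ ∪ {+∞}`. -/
def compCostT (f : ℕ × ℕ → WithTop ℝ) : ℕ → List ℕ → WithTop ℝ
  | _, [] => 0
  | s, c :: L => f (s + 1, s + c) + compCostT f (s + c) L

section

variable {f : ℕ × ℕ → WithTop ℝ} {B : ℕ}

lemma compCostT_append_singleton (c : ℕ) :
    ∀ (s : ℕ) (L : List ℕ),
      compCostT f s (L ++ [c]) = compCostT f s L + f (s + L.sum + 1, s + L.sum + c)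
  | s, [] => by simp [compCostT]
  | s, a :: L => by
    rw [List.cons_append, compCostT, compCostT, compCostT_append_singleton c (s + a) L,
      List.sum_cons, ← add_assoc, ← Nat.add_assoc]

lemma compCostT_ne_top (hfin : ∀ s c, 1 ≤ c → c ≤ B → f (s + 1, s + c) ≠ ⊤) :
    ∀ (s : ℕ) (L : List ℕ), (∀ c ∈ L, 1 ≤ c ∧ c ≤ B) → compCostT f s L ≠ ⊤
  | _, [], _ => by simp [compCostT]
  | s, a :: L, hL => by
    rw [compCostT]
    exact WithTop.add_ne_top.mpr ⟨hfin s a (hL a (by simp)).1 (hL a (by simp)).2,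
      compCostT_ne_top hfin (s + a) L fun c hc => hL c (by simp [hc])⟩

variable (f B) in
def partitionCosts (m : ℕ) : Set (WithTop ℝ) :=
  {x | ∃ L : List ℕ, (∀ c ∈ L, 1 ≤ c ∧ c ≤ B) ∧ L.sum = m ∧ x = compCostT f 0 L}

lemma partitionCosts_zero : partitionCosts f B 0 = {0} := by
  ext x
  constructor
  · rintro ⟨L, hL, hsum, rfl⟩
    obtain rfl : L = [] := List.eq_nil_iff_forall_not_mem.mpr fun c hc => by
      have := List.le_sum_of_mem hc
      have := (hL c hc).1
      omega
    rfl
  · rintro rfl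
    exact ⟨[], by simp, rfl, rfl⟩

lemma mem_partitionCosts_iff {m : ℕ} (hm : 1 ≤ m) {x : WithTop ℝ} :
    x ∈ partitionCosts f B m ↔
      ∃ k < m, m ≤ k + B ∧ ∃ y ∈ partitionCosts f B k, x = y + f (k + 1, m) := by
  constructor
  · rintro ⟨L, hL, hsum, rfl⟩
    rcases List.eq_nil_or_concat L with rfl | ⟨L', c, rfl⟩
    · simp at hsum; omega
    rw [List.concat_eq_append] at hL hsum ⊢
    have hc := hL c (by simp)
    rw [List.sum_append, List.sum_singleton] at hsum
    refine ⟨L'.sum, by omega, by omega, _, ⟨L', fun d hd => hL d (by simp [hd]), rfl, rfl⟩, ?_⟩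
    rw [compCostT_append_singleton, zero_add, hsum]
  · rintro ⟨k, hkm, hmk, _, ⟨L, hL, rfl, rfl⟩, rfl⟩
    refine ⟨L ++ [m - L.sum], ?_, by simp; omega, ?_⟩
    · intro c hc
      rcases List.mem_append.mp hc with hc | hc
      · exact hL c hc
      · simp at hc; omega
    · rw [compCostT_append_singleton, zero_add, Nat.add_sub_cancel' hkm.le]

variable (hf : ∀ j i : ℕ, 1 ≤ j → j ≤ i →
  (if B < i - j + 1 then f (j, i) = ⊤ else f (j, i) ≠ ⊤))
include hf

lemma length_le_of_ne_top {j i : ℕ} (hj : 1 ≤ j) (hji : j ≤ i) (h : f (j, i) ≠ ⊤) :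
    i - j + 1 ≤ B := by
  have := hf j i hj hji
  split_ifs at this with hlt
  · exact absurd this h
  · exact not_lt.mp hlt

lemma ne_top_of_length_le (s c : ℕ) (hc : 1 ≤ c) (hcB : c ≤ B) : f (s + 1, s + c) ≠ ⊤ := by
  have := hf (s + 1) (s + c) (by omega) (by omega)
  rwa [if_neg (by omega)] at this

lemma ne_top_of_mem_partitionCosts {m : ℕ} {x : WithTop ℝ} (hx : x ∈ partitionCosts f B m) :
    x ≠ ⊤ := by
  obtain ⟨L, hL, -, rfl⟩ := hx
  exact compCostT_ne_top (ne_top_of_length_le hf) 0 L hL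

end

section

variable {f : ℕ × ℕ → WithTop ℝ} {B n : ℕ} {M : ℕ → WithTop ℝ}
  (hM : ∀ i, ∀ hi : 1 ≤ i, i ≤ n →
    M i = (Finset.Icc 1 i).inf' (Finset.nonempty_Icc.mpr hi) (fun j => M (j - 1) + f (j, i)))
include hM

lemma dp_le {j i : ℕ} (hj : 1 ≤ j) (hji : j ≤ i) (hin : i ≤ n) :
    M i ≤ M (j - 1) + f (j, i) := by
  rw [hM i (hj.trans hji) hin]
  exact Finset.inf'_le _ (Finset.mem_Icc.mpr ⟨hj, hji⟩)

lemma exists_dp_eq {i : ℕ} (hi : 1 ≤ i) (hin : i ≤ n) :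
    ∃ j, 1 ≤ j ∧ j ≤ i ∧ M i = M (j - 1) + f (j, i) := by
  obtain ⟨j, hj, hjeq⟩ := Finset.exists_mem_eq_inf' (Finset.nonempty_Icc.mpr hi)
    (fun j => M (j - 1) + f (j, i))
  obtain ⟨hj1, hji⟩ := Finset.mem_Icc.mp hj
  exact ⟨j, hj1, hji, (hM i hi hin).trans hjeq⟩

lemma dp_le_of_mem_partitionCosts (hM0 : M 0 = 0) :
    ∀ m ≤ n, ∀ x ∈ partitionCosts f B m, M m ≤ x := by
  intro m
  induction m using Nat.strong_induction_on with
  | _ m ih =>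
    intro hmn x hx
    rcases Nat.eq_zero_or_pos m with rfl | hm
    · rw [partitionCosts_zero] at hx
      rw [hx, hM0]
    obtain ⟨k, hkm, -, y, hy, rfl⟩ := (mem_partitionCosts_iff hm).mp hx
    calc M m ≤ M (k + 1 - 1) + f (k + 1, m) := dp_le hM (by omega) hkm hmn
      _ = M k + f (k + 1, m) := by rw [Nat.add_sub_cancel]
      _ ≤ y + f (k + 1, m) := by gcongr; exact ih k hkm (by omega) y hy

variable (hf : ∀ j i : ℕ, 1 ≤ j → j ≤ i →
  (if B < i - j + 1 then f (j, i) = ⊤ else f (j, i) ≠ ⊤))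
include hf

lemma dp_mem_partitionCosts (hB : 1 ≤ B) (hM0 : M 0 = 0) :
    ∀ m ≤ n, M m ∈ partitionCosts f B m := by
  intro m
  induction m using Nat.strong_induction_on with
  | _ m ih =>
    intro hmn
    rcases Nat.eq_zero_or_pos m with rfl | hm
    · rw [partitionCosts_zero, hM0]
      rfl
    have hMm : M m ≠ ⊤ := by
      refine ne_top_of_le_ne_top ?_ (dp_le hM hm le_rfl hmn)
      have hfm := ne_top_of_length_le hf (m - 1) 1 le_rfl hB
      rw [Nat.sub_add_cancel hm] at hfm
      exact WithTop.add_ne_top.mpr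
        ⟨ne_top_of_mem_partitionCosts hf (ih (m - 1) (by omega) (by omega)), hfm⟩
    obtain ⟨j, hj, hjm, hMeq⟩ := exists_dp_eq hM hm hmn
    have hlen := length_le_of_ne_top hf hj hjm (WithTop.add_ne_top.mp (hMeq ▸ hMm)).2
    refine (mem_partitionCosts_iff hm).mpr ⟨j - 1, by omega, by omega, M (j - 1),
      ih (j - 1) (by omega) (by omega), ?_⟩
    rwa [Nat.sub_add_cancel hj]

end

theorem stmt8_general (n B : ℕ) (hB : 1 ≤ B) (f : ℕ × ℕ → WithTop ℝ)
    (hf : ∀ j i : ℕ, 1 ≤ j → j ≤ i →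
      (if B < i - j + 1 then f (j, i) = ⊤ else f (j, i) ≠ ⊤))
    (M : ℕ → WithTop ℝ) (hM0 : M 0 = 0)
    (hM : ∀ i, ∀ hi : 1 ≤ i, i ≤ n →
      M i = (Finset.Icc 1 i).inf' (Finset.nonempty_Icc.mpr hi)
        (fun j => M (j - 1) + f (j, i))) :
    M n ≠ ⊤ ∧
      IsLeast {x : WithTop ℝ | ∃ L : List ℕ,
          (∀ c ∈ L, 1 ≤ c ∧ c ≤ B) ∧ L.sum = n ∧ x = compCostT f 0 L}
        (M n) := by
  have hmem : M n ∈ partitionCosts f B n := dp_mem_partitionCosts hM hf hB hM0 n le_rfl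
  exact ⟨ne_top_of_mem_partitionCosts hf hmem,
    hmem, dp_le_of_mem_partitionCosts hM hM0 n le_rfl⟩

/-- Bounded-batch DP: if `f (j,i) = +∞` exactly when the interval length exceeds
`B ≥ 1`, the DP value `M n` is finite and equals the minimum total cost over
partitions of `{1,...,n}` into consecutive intervals of length at most `B`. -/
theorem stmt8 (n B : ℕ) (hn : 1 ≤ n) (hB : 1 ≤ B) (f : ℕ × ℕ → WithTop ℝ)
    (hf : ∀ j i : ℕ, 1 ≤ j → j ≤ i →
      (if B < i - j + 1 then f (j, i) = ⊤ else f (j, i) ≠ ⊤))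
    (M : ℕ → WithTop ℝ) (hM0 : M 0 = 0)
    (hM : ∀ i, ∀ hi : 1 ≤ i, i ≤ n →
      M i = (Finset.Icc 1 i).inf' (Finset.nonempty_Icc.mpr hi)
        (fun j => M (j - 1) + f (j, i))) :
    M n ≠ ⊤ ∧
      IsLeast {x : WithTop ℝ | ∃ L : List ℕ,
          (∀ c ∈ L, 1 ≤ c ∧ c ≤ B) ∧ L.sum = n ∧ x = compCostT f 0 L}
        (M n) :=
  stmt8_general n B hB f hf M hM0 hM
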